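/- If an initial distribution δ is positively winning for player 1, then the uniformly random strategy σ_R of player 1 witnesses this: γ₁(δ,σ_R,τ) > 0 for every strategy τ of player 2. -/

import Mathlib

open scoped Classical

noncomputable section

/-- A probability distribution on a finite type, given by a nonnegative
real-valued density summing to `1`. -/
structure FDist (X : Type*) [Fintype X] where
  f : X → ℝ
  nonneg : ∀ x, 0 ≤ f x
  sum_one : ∑ x, f x = 1

/-- The support of a distribution: the set of points with positive probability. -/
def FDist.support {X : Type*} [Fintype X] (δ : FDist X) : Finset X :=
  Finset.univ.filter fun x => 0 < δ.f x

/-- The uniform distribution on a nonempty finite set. -/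
def uniform {X : Type*} [Fintype X] (L : Finset X) (hL : L.Nonempty) : FDist X where
  f x := if x ∈ L then (L.card : ℝ)⁻¹ else 0
  nonneg x := by split_ifs <;> positivity
  sum_one := by
    rw [Finset.sum_ite_mem, Finset.univ_inter, Finset.sum_const, nsmul_eq_mul,
      mul_inv_cancel₀]
    exact_mod_cast (Finset.card_pos.mpr hL).ne'

/-- Uniform distribution on `L`, defaulting to the uniform distribution on the
whole type when `L` is empty. -/
def uniformD {X : Type*} [Fintype X] [Nonempty X] (L : Finset X) : FDist X :=
  if h : L.Nonempty then uniform L h else uniform Finset.univ Finset.univ_nonempty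

/-- The Dirac distribution on a point. -/
def dirac {X : Type*} [Fintype X] (x : X) : FDist X where
  f y := if y = x then 1 else 0
  nonneg y := by by_cases h : y = x <;> simp [h]
  sum_one := by simp

/-- A stochastic game with partial observation on both sides and a reachability
objective for player 1: states `K`, actions `I`, `J`, signals `C`, `D`, target
states `T`, transition probabilities `p`, and actions encoded in signals via
`act₁`, `act₂`. -/
structure Game (K I J C D : Type*) [Fintype K] [Fintype I] [Fintype J] [Fintype C] [Fintype D] where
  T : Finset K
  p : K → I → J → C × D × K → ℝ
  p_nonneg : ∀ k i j x, 0 ≤ p k i j x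
  p_sum : ∀ k i j, ∑ x : C × D × K, p k i j x = 1
  act₁ : C → I
  act₂ : D → J
  act_compat : ∀ k i j c d l, 0 < p k i j (c, d, l) → i = act₁ c ∧ j = act₂ d

/-- A (behavioral) strategy of player 1: a distribution on actions for each
finite sequence of received signals. -/
abbrev Strategy1 (I C : Type*) [Fintype I] : Type _ := List C → FDist I

/-- A (behavioral) strategy of player 2. -/
abbrev Strategy2 (J D : Type*) [Fintype J] : Type _ := List D → FDist J

/-- A play with `n+1` states: the initial state followed by `n` steps, each
consisting of a signal for player 1, a signal for player 2 and the next state. -/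
structure Hist (K C D : Type*) (n : ℕ) where
  first : K
  steps : Fin n → C × D × K

instance (K C D : Type*) [Fintype K] [Fintype C] [Fintype D] (n : ℕ) :
    Fintype (Hist K C D n) :=
  Fintype.ofEquiv (K × (Fin n → C × D × K))
    { toFun := fun x => ⟨x.1, x.2⟩
      invFun := fun h => (h.first, h.steps)
      left_inv := fun _ => rfl
      right_inv := fun _ => rfl }

namespace Hist

variable {K C D : Type*}

/-- The last state of a play. -/
def last : ∀ {n : ℕ}, Hist K C D n → K
  | 0, h => h.first
  | n + 1, h => (h.steps (Fin.last n)).2.2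

/-- The play obtained by removing the last step. -/
def init {n : ℕ} (h : Hist K C D (n + 1)) : Hist K C D n :=
  ⟨h.first, fun m => h.steps m.castSucc⟩

/-- The `m`-th state of a play, `0`-indexed: `state h 0` is the initial state
(called `k₁` in `1`-indexed notation). -/
def state {n : ℕ} (h : Hist K C D n) (m : Fin (n + 1)) : K :=
  if hm : m.val = 0 then h.first
  else (h.steps ⟨m.val - 1, by have := m.isLt; omega⟩).2.2

/-- The sequence of signals received by player 1 along the play. -/
def sig1 {n : ℕ} (h : Hist K C D n) : List C := List.ofFn fun m => (h.steps m).1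

/-- The sequence of signals received by player 2 along the play. -/
def sig2 {n : ℕ} (h : Hist K C D n) : List D := List.ofFn fun m => (h.steps m).2.1

/-- The play visits the target set `T`. -/
def visits (T : Finset K) {n : ℕ} (h : Hist K C D n) : Prop :=
  ∃ m : Fin (n + 1), h.state m ∈ T

end Hist

namespace Game

variable {K I J C D : Type*} [Fintype K] [Fintype I] [Fintype J] [Fintype C] [Fintype D]

/-- The probability of a given play of `n` steps, under initial distribution `δ`
and strategies `σ`, `τ`. -/
def playProb (G : Game K I J C D) (δ : FDist K) (σ : Strategy1 I C) (τ : Strategy2 J D) :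
    ∀ n : ℕ, Hist K C D n → ℝ
  | 0, h => δ.f h.first
  | n + 1, h =>
      G.playProb δ σ τ n h.init *
        ∑ i : I, ∑ j : J,
          (σ h.init.sig1).f i * (τ h.init.sig2).f j *
            G.p h.init.last i j (h.steps (Fin.last n))

/-- The probability that a play with `n+1` states visits the target set. -/
def reachProb (G : Game K I J C D) (δ : FDist K) (σ : Strategy1 I C)
    (τ : Strategy2 J D) (n : ℕ) : ℝ :=
  ∑ h : Hist K C D n, if h.visits G.T then G.playProb δ σ τ n h else 0

/-- The reachability probability `γ₁(δ,σ,τ)`: the supremum over horizons of the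
probability that the play visits the target set. -/
def val (G : Game K I J C D) (δ : FDist K) (σ : Strategy1 I C) (τ : Strategy2 J D) : ℝ :=
  ⨆ n : ℕ, G.reachProb δ σ τ n

/-- `δ` is almost-surely winning for player 1. -/
def AlmostSureWin1 (G : Game K I J C D) (δ : FDist K) : Prop :=
  ∃ σ, ∀ τ, G.val δ σ τ = 1

/-- `δ` is positively winning for player 1. -/
def PositiveWin1 (G : Game K I J C D) (δ : FDist K) : Prop :=
  ∃ σ, ∀ τ, 0 < G.val δ σ τ

/-- `δ` is positively winning for player 2. -/
def PositiveWin2 (G : Game K I J C D) (δ : FDist K) : Prop :=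
  ∃ τ, ∀ σ, G.val δ σ τ < 1

/-- `δ` is surely (equivalently here, almost-surely) winning for player 2. -/
def SureWin2 (G : Game K I J C D) (δ : FDist K) : Prop :=
  ∃ τ, ∀ σ, G.val δ σ τ = 0

/-- One-step belief operator of player 1. -/
def B1 (G : Game K I J C D) (L : Finset K) (c : C) : Finset K :=
  Finset.univ.filter fun k => ∃ l ∈ L, ∃ d : D, 0 < G.p l (G.act₁ c) (G.act₂ d) (c, d, k)

/-- One-step belief operator of player 2. -/
def B2 (G : Game K I J C D) (L : Finset K) (d : D) : Finset K :=
  Finset.univ.filter fun k => ∃ l ∈ L, ∃ c : C, 0 < G.p l (G.act₁ c) (G.act₂ d) (c, d, k)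

/-- Belief of player 1 after a sequence of signals. -/
def B1seq (G : Game K I J C D) (L : Finset K) (cs : List C) : Finset K := cs.foldl G.B1 L

/-- Belief of player 2 after a sequence of signals. -/
def B2seq (G : Game K I J C D) (L : Finset K) (ds : List D) : Finset K := ds.foldl G.B2 L

/-- One-step pessimistic belief operator of player 1. -/
def B1p (G : Game K I J C D) (L : Finset K) (c : C) : Finset K := G.B1 (L \ G.T) c

/-- One-step pessimistic belief operator of player 2. -/
def B2p (G : Game K I J C D) (L : Finset K) (d : D) : Finset K := G.B2 (L \ G.T) d

/-- Pessimistic belief of player 1 after a sequence of signals. -/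
def B1pseq (G : Game K I J C D) (L : Finset K) (cs : List C) : Finset K := cs.foldl G.B1p L

/-- Pessimistic belief of player 2 after a sequence of signals. -/
def B2pseq (G : Game K I J C D) (L : Finset K) (ds : List D) : Finset K := ds.foldl G.B2p L

/-- The operator `Φ` on collections of subsets of `K ∖ T`. -/
def Phi (G : Game K I J C D) (𝓛 : Set (Finset K)) : Set (Finset K) :=
  {L | L ∈ 𝓛 ∧ L ∩ G.T = ∅ ∧ ∃ j : J, ∀ d : D, G.act₂ d = j → G.B2 L d ∈ 𝓛}

theorem Phi_mono (G : Game K I J C D) : Monotone G.Phi := by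
  intro A B hAB L hL
  obtain ⟨h1, h2, j, hj⟩ := hL
  exact ⟨hAB h1, h2, j, fun d hd => hAB (hj d hd)⟩

/-- `𝓛_∞`, the greatest fixpoint of `Φ`. -/
def Linf (G : Game K I J C D) : Set (Finset K) :=
  OrderHom.gfp ⟨G.Phi, G.Phi_mono⟩

/-- The winning condition of the `𝓛`-game for player 1, on a play with initial
support `L`: some state `k_m` is a target state and all earlier pessimistic
beliefs of player 1 avoid `𝓛`. -/
def LWin (G : Game K I J C D) (𝓛 : Set (Finset K)) (L : Finset K) {n : ℕ}
    (h : Hist K C D n) : Prop :=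
  ∃ m : Fin (n + 1), h.state m ∈ G.T ∧
    ∀ r : ℕ, 1 ≤ r → r ≤ m.val → G.B1pseq L (h.sig1.take r) ∉ 𝓛

/-- The payoff `γ₁^𝓛(δ,σ,τ)` of player 1 in the `𝓛`-game, for an initial
distribution `δ` with support `L`. -/
def Lval (G : Game K I J C D) (𝓛 : Set (Finset K)) (L : Finset K) (δ : FDist K)
    (σ : Strategy1 I C) (τ : Strategy2 J D) : ℝ :=
  ⨆ n : ℕ, ∑ h : Hist K C D n, if G.LWin 𝓛 L h then G.playProb δ σ τ n h else 0

end Game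

/-- The uniformly random strategy `σ_R` of player 1. -/
def randomStrat (I C : Type*) [Fintype I] [Nonempty I] : Strategy1 I C :=
  fun _ => uniform Finset.univ Finset.univ_nonempty
variable {K I J C D : Type*} [Fintype K] [Fintype I] [Fintype J] [Fintype C] [Fintype D]
  [Nonempty K] [Nonempty I] [Nonempty J] [Nonempty C] [Nonempty D]

/-!
Whatever player 2 does, the random strategy `σ_R` plays each action with probability
`1/|I|`, at least `1/|I|` times the probability any strategy `σ` gives it. Multiplying along
a play, every play of `n` steps is at least `|I|^(-n)` times as likely under `σ_R` as under
`σ`, so if `σ` reaches the target with positive probability within `n` steps against `τ`,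
so does `σ_R`.
-/

theorem FDist.one_le_of_le_mul {X : Type*} [Fintype X] {μ ν : FDist X} {c : ℝ}
    (h : ∀ x, μ.f x ≤ c * ν.f x) : 1 ≤ c := by
  calc 1 = ∑ x, μ.f x := μ.sum_one.symm
    _ ≤ ∑ x, c * ν.f x := Finset.sum_le_sum fun x _ => h x
    _ = c := by rw [← Finset.mul_sum, ν.sum_one, mul_one]

theorem FDist.f_le_one {X : Type*} [Fintype X] (μ : FDist X) (x : X) : μ.f x ≤ 1 :=
  μ.sum_one ▸ Finset.single_le_sum (fun y _ => μ.nonneg y) (Finset.mem_univ x)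

namespace Hist

variable {K C D : Type*}

def equivFirst : Hist K C D 0 ≃ K where
  toFun h := h.first
  invFun k := ⟨k, Fin.elim0⟩
  left_inv := fun ⟨_, _⟩ => congrArg (Hist.mk _) (Subsingleton.elim _ _)
  right_inv _ := rfl

def equivInitLast (n : ℕ) : Hist K C D (n + 1) ≃ Hist K C D n × (C × D × K) where
  toFun h := (h.init, h.steps (Fin.last n))
  invFun x := ⟨x.1.first, Fin.snoc x.1.steps x.2⟩
  left_inv := fun ⟨_, s⟩ => congrArg (Hist.mk _) (Fin.snoc_init_self s)
  right_inv x := by simp only [init, Fin.snoc_castSucc, Fin.snoc_last]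

end Hist

namespace Game

-- Redeclared to drop the `Nonempty` instances of the variables above.
variable {K I J C D : Type*} [Fintype K] [Fintype I] [Fintype J] [Fintype C] [Fintype D]
  (G : Game K I J C D)

def stepProb (σ : Strategy1 I C) (τ : Strategy2 J D) {n : ℕ} (h : Hist K C D n)
    (s : C × D × K) : ℝ :=
  ∑ i, ∑ j, (σ h.sig1).f i * (τ h.sig2).f j * G.p h.last i j s

theorem playProb_succ (δ : FDist K) (σ : Strategy1 I C) (τ : Strategy2 J D) {n : ℕ}
    (h : Hist K C D (n + 1)) :
    G.playProb δ σ τ (n + 1) h =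
      G.playProb δ σ τ n h.init * G.stepProb σ τ h.init (h.steps (Fin.last n)) :=
  rfl

theorem stepProb_nonneg (σ : Strategy1 I C) (τ : Strategy2 J D) {n : ℕ}
    (h : Hist K C D n) (s : C × D × K) : 0 ≤ G.stepProb σ τ h s :=
  Finset.sum_nonneg fun i _ => Finset.sum_nonneg fun j _ =>
    mul_nonneg (mul_nonneg ((σ _).nonneg i) ((τ _).nonneg j)) (G.p_nonneg _ _ _ _)

theorem sum_stepProb (σ : Strategy1 I C) (τ : Strategy2 J D) {n : ℕ}
    (h : Hist K C D n) : ∑ s, G.stepProb σ τ h s = 1 := by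
  simp only [stepProb, Finset.sum_comm (γ := C × D × K), ← Finset.mul_sum, G.p_sum, mul_one,
    (τ _).sum_one, (σ _).sum_one]

theorem playProb_nonneg (δ : FDist K) (σ : Strategy1 I C) (τ : Strategy2 J D) :
    ∀ n (h : Hist K C D n), 0 ≤ G.playProb δ σ τ n h
  | 0, h => δ.nonneg h.first
  | n + 1, h => mul_nonneg (playProb_nonneg δ σ τ n h.init) (G.stepProb_nonneg σ τ _ _)

theorem sum_playProb (δ : FDist K) (σ : Strategy1 I C) (τ : Strategy2 J D) :
    ∀ n, ∑ h : Hist K C D n, G.playProb δ σ τ n h = 1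
  | 0 => (Fintype.sum_equiv Hist.equivFirst _ _ fun _ => rfl).trans δ.sum_one
  | n + 1 => by
    refine ((Hist.equivInitLast n).sum_comp
      fun x => G.playProb δ σ τ n x.1 * G.stepProb σ τ x.1 x.2).trans ?_
    rw [Fintype.sum_prod_type]
    simp only [← Finset.mul_sum, sum_stepProb, mul_one, sum_playProb δ σ τ n]

theorem reachProb_le_one (δ : FDist K) (σ : Strategy1 I C) (τ : Strategy2 J D) (n : ℕ) :
    G.reachProb δ σ τ n ≤ 1 :=
  calc G.reachProb δ σ τ n ≤ ∑ h : Hist K C D n, G.playProb δ σ τ n h :=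
        Finset.sum_le_sum fun h _ => by
          split_ifs
          exacts [le_rfl, G.playProb_nonneg δ σ τ n h]
    _ = 1 := G.sum_playProb δ σ τ n

theorem val_pos_iff (δ : FDist K) (σ : Strategy1 I C) (τ : Strategy2 J D) :
    0 < G.val δ σ τ ↔ ∃ n, 0 < G.reachProb δ σ τ n := by
  constructor
  · intro hval
    by_contra! hzero
    exact hval.not_ge (Real.iSup_le hzero le_rfl)
  · rintro ⟨n, hn⟩
    exact hn.trans_le (le_ciSup ⟨1, Set.forall_mem_range.2 (G.reachProb_le_one δ σ τ)⟩ n)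

section Domination

variable {σ σ' : Strategy1 I C} {c : ℝ}

theorem stepProb_le_mul (hσ : ∀ cs i, (σ cs).f i ≤ c * (σ' cs).f i)
    (τ : Strategy2 J D) {n : ℕ} (h : Hist K C D n) (s : C × D × K) :
    G.stepProb σ τ h s ≤ c * G.stepProb σ' τ h s := by
  simp only [stepProb, Finset.mul_sum]
  refine Finset.sum_le_sum fun i _ => Finset.sum_le_sum fun j _ => ?_
  calc (σ h.sig1).f i * (τ h.sig2).f j * G.p h.last i j s
      = (σ h.sig1).f i * ((τ h.sig2).f j * G.p h.last i j s) := mul_assoc ..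
    _ ≤ c * (σ' h.sig1).f i * ((τ h.sig2).f j * G.p h.last i j s) :=
        mul_le_mul_of_nonneg_right (hσ _ i) (mul_nonneg ((τ _).nonneg j) (G.p_nonneg ..))
    _ = c * ((σ' h.sig1).f i * (τ h.sig2).f j * G.p h.last i j s) := by ring

theorem playProb_le_pow_mul (hσ : ∀ cs i, (σ cs).f i ≤ c * (σ' cs).f i)
    (δ : FDist K) (τ : Strategy2 J D) :
    ∀ n (h : Hist K C D n), G.playProb δ σ τ n h ≤ c ^ n * G.playProb δ σ' τ n h
  | 0, h => by rw [pow_zero, one_mul]; rfl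
  | n + 1, h => by
    have hc : 0 ≤ c := zero_le_one.trans (FDist.one_le_of_le_mul (hσ []))
    calc G.playProb δ σ τ (n + 1) h
        ≤ (c ^ n * G.playProb δ σ' τ n h.init) * (c * G.stepProb σ' τ h.init _) :=
          mul_le_mul (playProb_le_pow_mul hσ δ τ n h.init) (G.stepProb_le_mul hσ τ _ _)
            (G.stepProb_nonneg σ τ _ _) (by positivity [G.playProb_nonneg δ σ' τ n h.init])
      _ = c ^ (n + 1) * G.playProb δ σ' τ (n + 1) h := by rw [playProb_succ]; ring

theorem reachProb_le_pow_mul (hσ : ∀ cs i, (σ cs).f i ≤ c * (σ' cs).f i)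
    (δ : FDist K) (τ : Strategy2 J D) (n : ℕ) :
    G.reachProb δ σ τ n ≤ c ^ n * G.reachProb δ σ' τ n := by
  simp only [reachProb, Finset.mul_sum, mul_ite, mul_zero]
  refine Finset.sum_le_sum fun h _ => ?_
  split_ifs
  exacts [G.playProb_le_pow_mul hσ δ τ n h, le_rfl]

end Domination

end Game

theorem le_card_mul_randomStrat {I C : Type*} [Fintype I] [Nonempty I] (σ : Strategy1 I C)
    (cs : List C) (i : I) : (σ cs).f i ≤ Fintype.card I * (randomStrat I C cs).f i := by
  have hcard : (Fintype.card I : ℝ) ≠ 0 := Nat.cast_ne_zero.2 Fintype.card_ne_zero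
  simpa [randomStrat, uniform, hcard] using (σ cs).f_le_one i

/-- if `δ` is positively winning for player 1, then the uniformly
random strategy witnesses it. -/
theorem random_strategy_positively_wins (G : Game K I J C D) (δ : FDist K)
    (hpos : G.PositiveWin1 δ) :
    ∀ τ : Strategy2 J D, 0 < G.val δ (randomStrat I C) τ := by
  intro τ
  obtain ⟨σ, hσ⟩ := hpos
  obtain ⟨n, hn⟩ := (G.val_pos_iff δ σ τ).1 (hσ τ)
  have hle := G.reachProb_le_pow_mul (le_card_mul_randomStrat σ) δ τ n
  exact (G.val_pos_iff δ _ τ).2 ⟨n, pos_of_mul_pos_right (hn.trans_le hle) (by positivity)⟩
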